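/- arXiv:1403.4329 — 3 statements merged into one kernel-verified Lean document; each statement's English description precedes it below -/
import Mathlib

section
/- Let û, â, b̂ > 0 and suppose 0 < h ≤ h₁, where h₁ is small enough that h·û·â < 1/2, so that (1+h u a)/(√h u b) ≥ 1/(2√h û b̂) for all |u| ≤ û, |a| ≤ â, 0 < |b| ≤ b̂ with u b > 0. Then there is a constant K > 0, independent of h, such that Φ((1+h u a)/(√h u b)) ≥ 1 - K h² for all such u, a, b, where Φ is the standard normal CDF. -/
open MeasureTheory Real

/-- The standard normal cumulative distribution function. -/
noncomputable def stdNormalCDF (x : ℝ) : ℝ :=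
  (Real.sqrt (2 * Real.pi))⁻¹ * ∫ t in Set.Iic x, Real.exp (-t ^ 2 / 2)

lemma gauss_integrable : Integrable (fun t : ℝ => Real.exp (-t ^ 2 / 2)) := by
  have := integrable_exp_neg_mul_sq (show (0:ℝ) < 1/2 by norm_num)
  convert this using 2 with t
  ring_nf

lemma gauss_mul_integrable : Integrable (fun t : ℝ => t * Real.exp (-t ^ 2 / 2)) := by
  have := integrable_mul_exp_neg_mul_sq (show (0:ℝ) < 1/2 by norm_num)
  convert this using 2 with t
  ring_nf

lemma gauss_total : (∫ t : ℝ, Real.exp (-t ^ 2 / 2)) = Real.sqrt (2 * Real.pi) := by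
  have := integral_gaussian (1/2 : ℝ)
  rw [show (π / (1/2 : ℝ)) = 2 * π by ring] at this
  rw [← this]
  congr 1 with t
  ring_nf

lemma gauss_tail (x : ℝ) (hx : 0 < x) :
    (∫ t in Set.Ioi x, t * Real.exp (-t ^ 2 / 2)) = Real.exp (-x ^ 2 / 2) := by
  have hderiv : ∀ t ∈ Set.Ici x,
      HasDerivAt (fun s : ℝ => -Real.exp (-s ^ 2 / 2)) (t * Real.exp (-t ^ 2 / 2)) t := by
    intro t _
    have h1 : HasDerivAt (fun s : ℝ => -s ^ 2 / 2) (-t) t := by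
      have := ((hasDerivAt_pow 2 t).neg).div_const 2
      simpa using this.congr_deriv (by ring)
    have := (h1.exp).neg
    exact this.congr_deriv (by ring)
  have hint : IntegrableOn (fun t : ℝ => t * Real.exp (-t ^ 2 / 2)) (Set.Ioi x) :=
    gauss_mul_integrable.integrableOn
  have htend : Filter.Tendsto (fun s : ℝ => -Real.exp (-s ^ 2 / 2)) Filter.atTop (nhds 0) := by
    rw [show (0:ℝ) = -0 by ring]
    apply Filter.Tendsto.neg
    apply Real.tendsto_exp_atBot.comp
    apply Filter.Tendsto.atBot_div_const (by norm_num)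
    apply Filter.tendsto_neg_atBot_iff.mpr
    simpa [pow_two] using Filter.Tendsto.atTop_mul_atTop₀
      (Filter.tendsto_id (α := ℝ)) (Filter.tendsto_id (α := ℝ))
  have := MeasureTheory.integral_Ioi_of_hasDerivAt_of_tendsto' hderiv hint htend
  rw [this]; ring

lemma mill (x : ℝ) (hx : 0 < x) :
    1 - Real.exp (-x ^ 2 / 2) / x ≤ stdNormalCDF x := by
  have hsplit : (∫ t in Set.Iic x, Real.exp (-t ^ 2 / 2))
      + (∫ t in Set.Ioi x, Real.exp (-t ^ 2 / 2)) = Real.sqrt (2 * Real.pi) := by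
    rw [intervalIntegral.integral_Iic_add_Ioi gauss_integrable.integrableOn
      gauss_integrable.integrableOn]
    exact gauss_total
  have htail : (∫ t in Set.Ioi x, Real.exp (-t ^ 2 / 2)) ≤ Real.exp (-x ^ 2 / 2) / x := by
    have hmono : (∫ t in Set.Ioi x, Real.exp (-t ^ 2 / 2))
        ≤ ∫ t in Set.Ioi x, (t / x) * Real.exp (-t ^ 2 / 2) := by
      apply MeasureTheory.setIntegral_mono_on gauss_integrable.integrableOn
      · exact MeasureTheory.IntegrableOn.congr_fun
          ((gauss_mul_integrable.integrableOn).div_const x)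
          (fun t _ => by ring) measurableSet_Ioi
      · exact measurableSet_Ioi
      · intro t ht
        have h1 : (1:ℝ) ≤ t / x := (one_le_div hx).mpr (le_of_lt ht)
        nlinarith [Real.exp_pos (-t ^ 2 / 2)]
    have heq : (∫ t in Set.Ioi x, (t / x) * Real.exp (-t ^ 2 / 2))
        = Real.exp (-x ^ 2 / 2) / x := by
      have : (∫ t in Set.Ioi x, (t / x) * Real.exp (-t ^ 2 / 2))
          = (∫ t in Set.Ioi x, t * Real.exp (-t ^ 2 / 2)) / x := by
        rw [← MeasureTheory.integral_div]
        congr 1 with t; ring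
      rw [this, gauss_tail x hx]
    linarith
  have hsqrt : (1:ℝ) ≤ Real.sqrt (2 * Real.pi) := by
    rw [show (1:ℝ) = Real.sqrt 1 by simp]
    apply Real.sqrt_le_sqrt
    nlinarith [Real.pi_gt_three]
  have hpos : (0:ℝ) < Real.sqrt (2 * Real.pi) := by linarith
  have htail_nonneg : (0:ℝ) ≤ ∫ t in Set.Ioi x, Real.exp (-t ^ 2 / 2) :=
    MeasureTheory.setIntegral_nonneg measurableSet_Ioi (fun t _ => (Real.exp_pos _).le)
  unfold stdNormalCDF
  have hIic : (∫ t in Set.Iic x, Real.exp (-t ^ 2 / 2))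
      = Real.sqrt (2 * Real.pi) - ∫ t in Set.Ioi x, Real.exp (-t ^ 2 / 2) := by linarith
  rw [hIic]
  rw [mul_sub, inv_mul_cancel₀ (ne_of_gt hpos)]
  have : (Real.sqrt (2 * Real.pi))⁻¹ * (∫ t in Set.Ioi x, Real.exp (-t ^ 2 / 2))
      ≤ Real.exp (-x ^ 2 / 2) / x := by
    calc (Real.sqrt (2 * Real.pi))⁻¹ * (∫ t in Set.Ioi x, Real.exp (-t ^ 2 / 2))
        ≤ 1 * (∫ t in Set.Ioi x, Real.exp (-t ^ 2 / 2)) := by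
          apply mul_le_mul_of_nonneg_right _ htail_nonneg
          rw [inv_le_one_iff₀]; right; exact hsqrt
      _ ≤ Real.exp (-x ^ 2 / 2) / x := by rw [one_mul]; exact htail
  linarith

lemma exp_lb (y : ℝ) (hy : 0 ≤ y) : y ^ 2 / 4 ≤ Real.exp y := by
  have h := Real.add_one_le_exp (y / 2)
  have h2 : Real.exp y = Real.exp (y/2) * Real.exp (y/2) := by
    rw [← Real.exp_add]; ring_nf
  nlinarith

/-- given bounds `â, b̂, û > 0`, there is a constant `K > 0`
(independent of `h`) such that for all small `h > 0` and all `u, a, b`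
with `|u| ≤ û`, `|a| ≤ â`, `|b| ≤ b̂`, `u·b > 0`, `1 + h u a ≥ 1/2`, and
`(1 + h u a)/(√h u b) ≥ 1/(2 √h û b̂)`, one has
`Φ((1 + h u a)/(√h u b)) ≥ 1 - K h²`. -/
theorem stmt3 (ahat bhat uhat : ℝ) (hahat : 0 < ahat) (hbhat : 0 < bhat)
    (huhat : 0 < uhat) :
    ∃ K > (0 : ℝ), ∃ h₁ > (0 : ℝ), ∀ h : ℝ, 0 < h → h ≤ h₁ →
      ∀ u a b : ℝ, |u| ≤ uhat → |a| ≤ ahat → |b| ≤ bhat → 0 < u * b →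
        1 / 2 ≤ 1 + h * u * a →
        (1 + h * u * a) / (Real.sqrt h * u * b)
            ≥ 1 / (2 * Real.sqrt h * uhat * bhat) →
        stdNormalCDF ((1 + h * u * a) / (Real.sqrt h * u * b))
            ≥ 1 - K * h ^ 2 := by
  refine ⟨512 * uhat ^ 5 * bhat ^ 5, by positivity, 1, by norm_num, ?_⟩
  intro h h0 h1 u a b hu ha hb hub hnum hge
  set x := (1 + h * u * a) / (Real.sqrt h * u * b) with hxdef
  have hs : 0 < Real.sqrt h := Real.sqrt_pos.mpr h0
  have hs1 : Real.sqrt h ≤ 1 := by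
    rw [show (1:ℝ) = Real.sqrt 1 by simp]
    exact Real.sqrt_le_sqrt h1
  have hxpos : 0 < x := by
    apply div_pos (by linarith)
    rw [mul_assoc]
    exact mul_pos hs hub
  -- lower bound on x
  have hc : (0:ℝ) < 1 / (2 * Real.sqrt h * uhat * bhat) := by positivity
  have hxlb : 1 / (2 * Real.sqrt h * uhat * bhat) ≤ x := hge
  -- tail bound
  have hmill := mill x hxpos
  -- exp(-x²/2)/x ≤ 16/x^5
  have hexp : Real.exp (-x ^ 2 / 2) ≤ 16 / x ^ 4 := by
    have := exp_lb (x ^ 2 / 2) (by positivity)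
    have hinv : Real.exp (-x ^ 2 / 2) = (Real.exp (x ^ 2 / 2))⁻¹ := by
      rw [← Real.exp_neg]; ring_nf
    rw [hinv]
    rw [inv_le_iff_one_le_mul₀ (Real.exp_pos _)]
    have hx4 : (0:ℝ) < x ^ 4 := by positivity
    rw [div_mul_eq_mul_div, le_div_iff₀ hx4]
    nlinarith [Real.exp_pos (x ^ 2 / 2)]
  have hbound : Real.exp (-x ^ 2 / 2) / x ≤ 16 / x ^ 5 := by
    rw [div_le_div_iff₀ hxpos (by positivity)]
    calc Real.exp (-x ^ 2 / 2) * x ^ 5 ≤ (16 / x ^ 4) * x ^ 5 := by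
          apply mul_le_mul_of_nonneg_right hexp (by positivity)
      _ = 16 * x := by field_simp
  -- 1/x^5 ≤ (2√h û b̂)^5
  have hx5 : 16 / x ^ 5 ≤ 512 * uhat ^ 5 * bhat ^ 5 * h ^ 2 := by
    have hcx : (0:ℝ) < 2 * Real.sqrt h * uhat * bhat := by positivity
    have h5 : (1 / (2 * Real.sqrt h * uhat * bhat)) ^ 5 ≤ x ^ 5 := by
      apply pow_le_pow_left₀ (le_of_lt hc) hxlb
    have h6 : 16 / x ^ 5 ≤ 16 * (2 * Real.sqrt h * uhat * bhat) ^ 5 := by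
      rw [div_le_iff₀ (by positivity)]
      have h7 : (1:ℝ) ≤ x ^ 5 * (2 * Real.sqrt h * uhat * bhat) ^ 5 := by
        have := mul_le_mul_of_nonneg_right h5 (le_of_lt (pow_pos hcx 5))
        rwa [div_pow, one_pow, div_mul_cancel₀ _ (ne_of_gt (pow_pos hcx 5))] at this
      nlinarith
    have hsh : (Real.sqrt h) ^ 5 ≤ h ^ 2 := by
      have hsq : (Real.sqrt h) ^ 2 = h := Real.sq_sqrt (le_of_lt h0)
      calc (Real.sqrt h) ^ 5 = ((Real.sqrt h) ^ 2) ^ 2 * Real.sqrt h := by ring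
        _ = h ^ 2 * Real.sqrt h := by rw [hsq]
        _ ≤ h ^ 2 * 1 := by apply mul_le_mul_of_nonneg_left hs1 (by positivity)
        _ = h ^ 2 := by ring
    have : 16 * (2 * Real.sqrt h * uhat * bhat) ^ 5
        = 512 * uhat ^ 5 * bhat ^ 5 * (Real.sqrt h) ^ 5 := by ring
    rw [this] at h6
    calc 16 / x ^ 5 ≤ 512 * uhat ^ 5 * bhat ^ 5 * (Real.sqrt h) ^ 5 := h6
      _ ≤ 512 * uhat ^ 5 * bhat ^ 5 * h ^ 2 := by
          apply mul_le_mul_of_nonneg_left hsh (by positivity)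
  linarith
end

section
/- Let (ξ_n) be i.i.d. standard normal random variables, and let x_n satisfy x_{n+1} = x_n(1 + h u_n a_n + √h u_n b_n ξ_{n+1}) with x_0 > 0 deterministic, where the deterministic sequences satisfy ā ≤ |a_n| ≤ â, b̄ ≤ |b_n| ≤ b̂, ū ≤ |u_n| ≤ û with all bounds positive, and h = T/N. Then for each γ ∈ (0,1) there exists N(γ) such that for all N ≥ N(γ), P(x_n > 0 for all n = 1,…,N) ≥ 1 - γ. -/
/-!
A standard Gaussian is sub-Gaussian, so `P(|ξ| ≥ t) ≤ 2 exp(-t²/2)`. Let `A, B, U` bound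
`|a_n|, |b_n|, |u_n|` and take the threshold `t_N = c √N` with `c = (2 √T U B)⁻¹`: then
`|ξ_{n+1}| < t_N` keeps the noise term `√h u_n b_n ξ_{n+1}` below `1/2` in absolute value, and
the drift `h u_n a_n` is at most `1/2` for large `N`. On the event that `|ξ_n| < t_N` for all
`1 ≤ n ≤ N` every factor of the recursion is positive, and by the union bound the complement has
probability at most `2 N exp(-c² N / 2) → 0`.
-/

open MeasureTheory ProbabilityTheory Filter Real Topology
open scoped NNReal

lemma hasSubgaussianMGF_id_gaussianReal (v : ℝ≥0) :
    HasSubgaussianMGF id v (gaussianReal 0 v) where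
  integrable_exp_mul := integrable_exp_mul_gaussianReal
  mgf_le t := by rw [mgf_id_gaussianReal]; simp

lemma hasSubgaussianMGF_of_map_eq_gaussianReal {Ω : Type*} {m : MeasurableSpace Ω}
    {μ : Measure Ω} {X : Ω → ℝ} {v : ℝ≥0} (hX : AEMeasurable X μ)
    (h : μ.map X = gaussianReal 0 v) : HasSubgaussianMGF X v μ :=
  (HasSubgaussianMGF.id_map_iff hX).1 (h ▸ hasSubgaussianMGF_id_gaussianReal v)

namespace ProbabilityTheory.HasSubgaussianMGF

lemma measureReal_abs_ge_le {Ω : Type*} {m : MeasurableSpace Ω} {μ : Measure Ω} {X : Ω → ℝ}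
    {c : ℝ≥0} (h : HasSubgaussianMGF X c μ) {ε : ℝ} (hε : 0 ≤ ε) :
    μ.real {ω | ε ≤ |X ω|} ≤ 2 * exp (-ε ^ 2 / (2 * c)) := by
  have hsplit : {ω | ε ≤ |X ω|} = {ω | ε ≤ X ω} ∪ {ω | ε ≤ (-X) ω} := by
    ext ω; simp [le_abs]
  rw [hsplit, two_mul]
  exact (measureReal_union_le _ _).trans
    (add_le_add (h.measure_ge_le hε) (h.neg.measure_ge_le hε))

end ProbabilityTheory.HasSubgaussianMGF

lemma measureReal_biUnion_abs_ge_le {ι Ω : Type*} {m : MeasurableSpace Ω} {μ : Measure Ω}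
    {X : ι → Ω → ℝ} {c : ℝ≥0} (hX : ∀ i, HasSubgaussianMGF (X i) c μ) (s : Finset ι)
    {ε : ℝ} (hε : 0 ≤ ε) :
    μ.real (⋃ i ∈ s, {ω | ε ≤ |X i ω|}) ≤ s.card * (2 * exp (-ε ^ 2 / (2 * c))) := by
  calc μ.real (⋃ i ∈ s, {ω | ε ≤ |X i ω|})
      ≤ ∑ i ∈ s, μ.real {ω | ε ≤ |X i ω|} := measureReal_biUnion_finset_le _ _
    _ ≤ ∑ _i ∈ s, 2 * exp (-ε ^ 2 / (2 * c)) :=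
        Finset.sum_le_sum fun i _ => (hX i).measureReal_abs_ge_le hε
    _ = s.card * (2 * exp (-ε ^ 2 / (2 * c))) := by rw [Finset.sum_const, nsmul_eq_mul]

lemma measureReal_biUnion_Icc_abs_ge_mul_sqrt_le {Ω : Type*} {m : MeasurableSpace Ω}
    {μ : Measure Ω} {X : ℕ → Ω → ℝ} (hX : ∀ n, HasSubgaussianMGF (X n) 1 μ) (N : ℕ)
    {c : ℝ} (hc : 0 ≤ c) :
    μ.real (⋃ n ∈ Finset.Icc 1 N, {ω | c * √N ≤ |X n ω|}) ≤
      2 * (N * exp (-(c ^ 2 / 2 * N))) := by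
  refine (measureReal_biUnion_abs_ge_le hX _ (by positivity)).trans_eq ?_
  rw [Nat.card_Icc, Nat.add_sub_cancel, mul_pow, sq_sqrt N.cast_nonneg]
  push_cast
  ring_nf

lemma tendsto_natCast_mul_exp_neg_mul_atTop {k : ℝ} (hk : 0 < k) :
    Tendsto (fun N : ℕ => (N : ℝ) * exp (-(k * N))) atTop (𝓝 0) := by
  simpa [Function.comp_def] using (tendsto_rpow_mul_exp_neg_mul_atTop_nhds_zero 1 k hk).comp
    tendsto_natCast_atTop_atTop

lemma pos_of_eq_mul_of_pos {x f : ℕ → ℝ} (hx0 : 0 < x 0) (hrec : ∀ n, x (n + 1) = x n * f n)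
    {N : ℕ} (hf : ∀ n < N, 0 < f n) : ∀ n ≤ N, 0 < x n := by
  intro n hn
  induction n with
  | zero => exact hx0
  | succ n ih => rw [hrec]; exact mul_pos (ih (by omega)) (hf n (by omega))

lemma one_add_mul_add_sqrt_mul_pos {h u a b z U A B : ℝ} (hh : 0 ≤ h)
    (hu : |u| ≤ U) (ha : |a| ≤ A) (hb : |b| ≤ B)
    (hdrift : h * U * A ≤ 1 / 2) (hnoise : √h * U * B * |z| < 1 / 2) :
    0 < 1 + h * u * a + √h * u * b * z := by
  have hU : 0 ≤ U := (abs_nonneg u).trans hu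
  have hd : |h * u * a| ≤ h * U * A := by
    rw [abs_mul, abs_mul, abs_of_nonneg hh]
    gcongr
  have hs : |√h * u * b * z| ≤ √h * U * B * |z| := by
    rw [abs_mul, abs_mul, abs_mul, abs_of_nonneg (sqrt_nonneg h)]
    gcongr
  linarith [neg_abs_le (h * u * a), neg_abs_le (√h * u * b * z)]

lemma pos_of_eq_mul_one_add_mul_add_sqrt_mul {x u a b z : ℕ → ℝ} {h U A B : ℝ} {N : ℕ}
    (hx0 : 0 < x 0)
    (hrec : ∀ n, x (n + 1) = x n * (1 + h * u n * a n + √h * u n * b n * z (n + 1)))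
    (hh : 0 ≤ h) (hu : ∀ n, |u n| ≤ U) (ha : ∀ n, |a n| ≤ A) (hb : ∀ n, |b n| ≤ B)
    (hdrift : h * U * A ≤ 1 / 2)
    (hnoise : ∀ n ∈ Finset.Icc 1 N, √h * U * B * |z n| < 1 / 2) :
    ∀ n ≤ N, 0 < x n :=
  pos_of_eq_mul_of_pos hx0 hrec fun n hn => one_add_mul_add_sqrt_mul_pos hh (hu n) (ha n) (hb n)
    hdrift (hnoise (n + 1) (Finset.mem_Icc.2 ⟨by omega, by omega⟩))

theorem stmt5_general {Ω : Type*} [MeasureSpace Ω] [IsProbabilityMeasure (ℙ : Measure Ω)]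
    (ξ : ℕ → Ω → ℝ) (hmeas : ∀ n, Measurable (ξ n))
    (hgauss : ∀ n, Measure.map (ξ n) ℙ = gaussianReal 0 1)
    (T : ℝ) (hT : 0 < T)
    (abar ahat bbar bhat ubar uhat : ℝ)
    (γ : ℝ) (hγ : γ ∈ Set.Ioo (0 : ℝ) 1) :
    ∃ N₀ : ℕ, ∀ N : ℕ, N ≥ N₀ →
      ∀ (a b u : ℕ → ℝ) (x : ℕ → Ω → ℝ) (x₀ : ℝ), 0 < x₀ →
        (∀ n, abar ≤ |a n| ∧ |a n| ≤ ahat) →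
        (∀ n, bbar ≤ |b n| ∧ |b n| ≤ bhat) →
        (∀ n, ubar ≤ |u n| ∧ |u n| ≤ uhat) →
        (∀ ω, x 0 ω = x₀) →
        (∀ n ω, x (n + 1) ω =
          x n ω * (1 + (T / N) * u n * a n
            + Real.sqrt (T / N) * u n * b n * ξ (n + 1) ω)) →
        (ℙ {ω | ∀ n, 1 ≤ n → n ≤ N → 0 < x n ω}).toReal ≥ 1 - γ := by
  set A := max ahat 1
  set B := max bhat 1
  set U := max uhat 1
  set c := (2 * √T * U * B)⁻¹
  obtain ⟨N₀, hN₀⟩ := eventually_atTop.1 <|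
    (((tendsto_natCast_mul_exp_neg_mul_atTop (by positivity : 0 < c ^ 2 / 2)).const_mul 2)
      |>.eventually (gt_mem_nhds (by simpa using hγ.1))).and <|
    (((tendsto_const_div_atTop_nhds_zero_nat T).mul_const U).mul_const A
      |>.eventually (gt_mem_nhds (show 0 * U * A < 1 / 2 by simp))).and (eventually_gt_atTop 0)
  refine ⟨N₀, fun N hN a b u x x₀ hx₀ ha hb hu hx0 hrec => ?_⟩
  obtain ⟨htail, hdrift, hNpos⟩ := hN₀ N hN
  have hnoise : √(T / N) * U * B * (c * √N) = 1 / 2 := by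
    simp only [c, U, B]
    have hN : (N : ℝ) ≠ 0 := by positivity
    rw [sqrt_div' _ N.cast_nonneg]
    field_simp
  set bad := ⋃ n ∈ Finset.Icc 1 N, {ω | c * √N ≤ |ξ n ω|}
  have hgood : badᶜ ⊆ {ω | ∀ n, 1 ≤ n → n ≤ N → 0 < x n ω} := by
    intro ω hω n hn1 hnN
    simp only [bad, Set.mem_compl_iff, Set.mem_iUnion, Set.mem_ofPred_eq, not_exists, not_le]
      at hω
    refine pos_of_eq_mul_one_add_mul_add_sqrt_mul (x := (x · ω)) (hx0 ω ▸ hx₀) (hrec · ω)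
      (by positivity) (fun k => (hu k).2.trans (le_max_left _ _))
      (fun k => (ha k).2.trans (le_max_left _ _)) (fun k => (hb k).2.trans (le_max_left _ _))
      hdrift.le (fun k hk => lt_of_lt_of_eq (by gcongr; exact hω k hk) hnoise) n hnN
  have hbad : (ℙ : Measure Ω).real bad ≤ γ :=
    (measureReal_biUnion_Icc_abs_ge_mul_sqrt_le (fun n => hasSubgaussianMGF_of_map_eq_gaussianReal
      (hmeas n).aemeasurable (hgauss n)) N (by positivity)).trans htail.le
  calc 1 - γ ≤ (ℙ : Measure Ω).real badᶜ := by
        rw [probReal_compl_eq_one_sub (by measurability)]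
        linarith
    _ ≤ _ := measureReal_mono hgood

/-- positivity of the wealth process with probability close to 1.
For the recursion `x_{n+1} = x_n (1 + h u_n a_n + √h u_n b_n ξ_{n+1})` with
`x_0 > 0`, i.i.d. standard normal `ξ_n`, bounded coefficients and `h = T/N`,
for each `γ ∈ (0,1)` there is `N(γ)` such that for all `N ≥ N(γ)`,
`P(x_n > 0 for all n = 1,…,N) ≥ 1 - γ`. -/
theorem stmt5 {Ω : Type*} [MeasureSpace Ω] [IsProbabilityMeasure (ℙ : Measure Ω)]
    (ξ : ℕ → Ω → ℝ) (hmeas : ∀ n, Measurable (ξ n))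
    (hindep : iIndepFun ξ ℙ)
    (hgauss : ∀ n, Measure.map (ξ n) ℙ = gaussianReal 0 1)
    (T : ℝ) (hT : 0 < T)
    (abar ahat bbar bhat ubar uhat : ℝ)
    (habar : 0 < abar) (hbbar : 0 < bbar) (hubar : 0 < ubar)
    (γ : ℝ) (hγ : γ ∈ Set.Ioo (0 : ℝ) 1) :
    ∃ N₀ : ℕ, ∀ N : ℕ, N ≥ N₀ →
      ∀ (a b u : ℕ → ℝ) (x : ℕ → Ω → ℝ) (x₀ : ℝ), 0 < x₀ →
        (∀ n, abar ≤ |a n| ∧ |a n| ≤ ahat) →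
        (∀ n, bbar ≤ |b n| ∧ |b n| ≤ bhat) →
        (∀ n, ubar ≤ |u n| ∧ |u n| ≤ uhat) →
        (∀ ω, x 0 ω = x₀) →
        (∀ n ω, x (n + 1) ω =
          x n ω * (1 + (T / N) * u n * a n
            + Real.sqrt (T / N) * u n * b n * ξ (n + 1) ω)) →
        (ℙ {ω | ∀ n, 1 ≤ n → n ≤ N → 0 < x n ω}).toReal ≥ 1 - γ :=
  stmt5_general ξ hmeas hgauss T hT abar ahat bbar bhat ubar uhat γ hγ
end

section
/- Tail smallness of the modification region: Under the setting of the discrete Itô formula, the quantity Δ₂ = E[|φ(ζ) - φ_δ(ζ)|], where ζ = 1 + h u a + √h u b ξ with ξ standard normal, satisfies Δ₂ ≤ K₆ h^{3/2} u² b² for all sufficiently small h, with K₆ independent of h. In particular, the contribution of |ζ| ≤ δ is O(h^{3/2}). -/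
/-!
On the event `|ζ| < δ` the Gaussian term `√h u b ξ` must bridge the gap between
`1 + h u a ≈ 1` and `(-δ, δ)`, so `|√h u b ξ| ≥ ε := (1 - δ)/2` once `h` is small.
There `|φ - φ_δ| ≤ K ≤ K (√h u b ξ / ε)⁴`, and off that event the difference
vanishes; a fourth-moment Chebyshev bound gives `Δ₂ ≤ K E[ξ⁴] h² u⁴ b⁴ / ε⁴`, which
is `O(h^{3/2} u² b²)` for `h ≤ 1` and bounded `u`, `b`.
-/

open MeasureTheory ProbabilityTheory Real

lemma integrable_pow_four_of_map_eq_gaussianReal {Ω : Type*} [MeasurableSpace Ω]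
    {μ : Measure Ω} {ξ : Ω → ℝ} (hξ : Measurable ξ) {m : ℝ} {v : NNReal}
    (hgauss : μ.map ξ = gaussianReal m v) :
    Integrable (fun ω => ξ ω ^ 4) μ := by
  have hLp : MemLp ξ 4 μ := by
    have := memLp_id_gaussianReal (μ := m) (v := v) 4
    rwa [← hgauss, memLp_map_measure_iff aestronglyMeasurable_id hξ.aemeasurable] at this
  refine (hLp.integrable_norm_pow four_ne_zero).congr (ae_of_all _ fun ω => ?_)
  simp only [Real.norm_eq_abs, Even.pow_abs (by decide : Even 4)]

lemma add_le_abs_one_add {x δ ε : ℝ} (hx : |x| ≤ ε) (hδε : δ + 2 * ε ≤ 1) :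
    δ + ε ≤ |1 + x| := by
  have := (abs_le.mp hx).1
  exact le_abs.mpr (Or.inl (by linarith))

section Modification

variable {φ φδ : ℝ → ℝ} {δ K : ℝ}
  (heq : ∀ s : ℝ, s ∉ Set.Ioo (-δ) δ → φδ s = φ s)
  (hclose : ∀ s ∈ Set.Ioo (-δ) δ, |φδ s - φ s| < K)
include heq hclose

lemma abs_sub_le_mul_div_pow_four (hK : 0 ≤ K) {z y ε : ℝ} (hε : 0 < ε)
    (hz : δ + ε ≤ |z|) :
    |φ (z + y) - φδ (z + y)| ≤ K * (y / ε) ^ 4 := by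
  by_cases hmem : z + y ∈ Set.Ioo (-δ) δ
  · have hzy : |z + y| < δ := abs_lt.mpr hmem
    have hy : ε ≤ |y| := by
      have : |z| ≤ |z + y| + |y| := by simpa using abs_sub (z + y) y
      linarith
    have hpow : 1 ≤ (y / ε) ^ 4 := by
      rw [← Even.pow_abs (by decide : Even 4), abs_div, abs_of_pos hε]
      exact one_le_pow₀ ((one_le_div hε).mpr hy)
    calc |φ (z + y) - φδ (z + y)| ≤ K := by
          rw [abs_sub_comm]; exact (hclose _ hmem).le
      _ ≤ K * (y / ε) ^ 4 := le_mul_of_one_le_right hK hpow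
  · rw [heq _ hmem, sub_self, abs_zero]
    positivity

lemma integral_abs_sub_le_mul_integral_pow_four {Ω : Type*} [MeasurableSpace Ω]
    {μ : Measure Ω} {Y : Ω → ℝ} (hY : Integrable (fun ω => Y ω ^ 4) μ) (hK : 0 ≤ K)
    {z c ε : ℝ} (hε : 0 < ε) (hz : δ + ε ≤ |z|) :
    ∫ ω, |φ (z + c * Y ω) - φδ (z + c * Y ω)| ∂μ ≤
      K * (c / ε) ^ 4 * ∫ ω, Y ω ^ 4 ∂μ := by
  rw [← integral_const_mul]
  refine integral_mono_of_nonneg (ae_of_all _ fun _ => abs_nonneg _) (hY.const_mul _)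
    (ae_of_all _ fun ω => ?_)
  calc |φ (z + c * Y ω) - φδ (z + c * Y ω)| ≤ K * (c * Y ω / ε) ^ 4 :=
        abs_sub_le_mul_div_pow_four heq hclose hK hε hz
    _ = K * (c / ε) ^ 4 * Y ω ^ 4 := by ring

end Modification

lemma sq_mul_pow_four_le {h u b U B : ℝ} (hh₀ : 0 ≤ h) (hh₁ : h ≤ 1) (hu : |u| ≤ U)
    (hb : |b| ≤ B) :
    h ^ 2 * (u * b) ^ 4 ≤ U ^ 2 * B ^ 2 * (h ^ ((3 : ℝ) / 2) * u ^ 2 * b ^ 2) := by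
  have hsplit : h ^ 2 = h ^ ((1 : ℝ) / 2) * h ^ ((3 : ℝ) / 2) := by
    rw [← rpow_add' hh₀ (by norm_num)]
    norm_num
  have hu2 : u ^ 2 ≤ U ^ 2 := sq_le_sq' (abs_le.mp hu).1 (abs_le.mp hu).2
  have hb2 : b ^ 2 ≤ B ^ 2 := sq_le_sq' (abs_le.mp hb).1 (abs_le.mp hb).2
  have hsmall : h ^ ((1 : ℝ) / 2) * u ^ 2 * b ^ 2 ≤ U ^ 2 * B ^ 2 := by
    calc h ^ ((1 : ℝ) / 2) * u ^ 2 * b ^ 2 ≤ 1 * U ^ 2 * B ^ 2 := by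
          gcongr
          exact rpow_le_one hh₀ hh₁ (by norm_num)
      _ = U ^ 2 * B ^ 2 := by ring
  calc h ^ 2 * (u * b) ^ 4
      = (h ^ ((1 : ℝ) / 2) * u ^ 2 * b ^ 2) * (h ^ ((3 : ℝ) / 2) * u ^ 2 * b ^ 2) := by
        rw [hsplit]; ring
    _ ≤ U ^ 2 * B ^ 2 * (h ^ ((3 : ℝ) / 2) * u ^ 2 * b ^ 2) := by gcongr

theorem stmt8_general {Ω : Type*} [MeasureSpace Ω]
    (ξ : Ω → ℝ) (hξ : Measurable ξ)
    (hgauss : Measure.map ξ ℙ = gaussianReal 0 1)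
    (φ φδ : ℝ → ℝ) (δ K : ℝ) (hδ : δ ∈ Set.Ioo (0 : ℝ) 1) (hK : 0 < K)
    (heq : ∀ s : ℝ, s ∉ Set.Ioo (-δ) δ → φδ s = φ s)
    (hclose : ∀ s ∈ Set.Ioo (-δ) δ, |φδ s - φ s| < K)
    (abar ahat bbar bhat ubar uhat : ℝ) :
    ∃ h₀ > (0 : ℝ), ∃ K₆ > (0 : ℝ), ∀ h : ℝ, 0 < h → h ≤ h₀ →
      ∀ u a b : ℝ,
        abar ≤ |a| → |a| ≤ ahat → bbar ≤ |b| → |b| ≤ bhat →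
        ubar ≤ |u| → |u| ≤ uhat →
        (∫ ω, |φ (1 + h * u * a + Real.sqrt h * u * b * ξ ω)
            - φδ (1 + h * u * a + Real.sqrt h * u * b * ξ ω)| ∂ℙ)
          ≤ K₆ * h ^ ((3 : ℝ) / 2) * u ^ 2 * b ^ 2 := by
  obtain ⟨hδ₀, hδ₁⟩ := hδ
  set ε := (1 - δ) / 2 with hε_def
  have hε : 0 < ε := by positivity
  set M := ∫ ω, ξ ω ^ 4 ∂ℙ
  have hM : 0 ≤ M := integral_nonneg fun ω => by positivity
  set A := max (uhat * ahat) 1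
  have hA : 0 < A := lt_max_of_lt_right one_pos
  set U := max uhat 1
  set B := max bhat 1
  refine ⟨ε / A, by positivity, K * (M + 1) * U ^ 2 * B ^ 2 / ε ^ 4, by positivity,
    fun h hh₀ hh u a b _ ha _ hb _ hu => ?_⟩
  have hua : |h * u * a| ≤ ε := by
    have hA' : |u| * |a| ≤ A :=
      (mul_le_mul hu ha (abs_nonneg _) ((abs_nonneg _).trans hu)).trans (le_max_left _ _)
    rw [mul_assoc, abs_mul, abs_of_pos hh₀, abs_mul]
    calc h * (|u| * |a|) ≤ ε / A * A := by gcongr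
      _ = ε := div_mul_cancel₀ _ hA.ne'
  have hh₁ : h ≤ 1 :=
    hh.trans ((div_le_self hε.le (le_max_right _ _)).trans (by linarith [hε_def]))
  calc _ ≤ K * (√h * u * b / ε) ^ 4 * M :=
        integral_abs_sub_le_mul_integral_pow_four heq hclose
          (integrable_pow_four_of_map_eq_gaussianReal hξ hgauss) hK.le hε
          (add_le_abs_one_add hua (by linarith [hε_def]))
    _ = K * M / ε ^ 4 * (h ^ 2 * (u * b) ^ 4) := by
        rw [div_pow, mul_pow, mul_pow, show √h ^ 4 = (√h ^ 2) ^ 2 by ring, sq_sqrt hh₀.le]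
        ring
    _ ≤ K * (M + 1) / ε ^ 4 * (U ^ 2 * B ^ 2 * (h ^ ((3 : ℝ) / 2) * u ^ 2 * b ^ 2)) := by
        gcongr K * ?_ / ε ^ 4 * ?_
        · linarith
        · exact sq_mul_pow_four_le hh₀.le hh₁ (hu.trans (le_max_left _ _))
            (hb.trans (le_max_left _ _))
    _ = _ := by ring

/-- tail smallness of the modification region. Under the setting
of the discrete Itô formula, `Δ₂ = E[|φ(ζ) - φ_δ(ζ)|]` with
`ζ = 1 + h u a + √h u b ξ` satisfies `Δ₂ ≤ K₆ h^{3/2} u² b²` for all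
sufficiently small `h`, with `K₆` independent of `h`. -/
theorem stmt8 {Ω : Type*} [MeasureSpace Ω] [IsProbabilityMeasure (ℙ : Measure Ω)]
    (ξ : Ω → ℝ) (hξ : Measurable ξ)
    (hgauss : Measure.map ξ ℙ = gaussianReal 0 1)
    (φ φδ : ℝ → ℝ) (δ K : ℝ) (hδ : δ ∈ Set.Ioo (0 : ℝ) 1) (hK : 0 < K)
    (heq : ∀ s : ℝ, s ∉ Set.Ioo (-δ) δ → φδ s = φ s)
    (hclose : ∀ s ∈ Set.Ioo (-δ) δ, |φδ s - φ s| < K)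
    (abar ahat bbar bhat ubar uhat : ℝ)
    (habar : 0 < abar) (hbbar : 0 < bbar) (hubar : 0 < ubar) :
    ∃ h₀ > (0 : ℝ), ∃ K₆ > (0 : ℝ), ∀ h : ℝ, 0 < h → h ≤ h₀ →
      ∀ u a b : ℝ,
        abar ≤ |a| → |a| ≤ ahat → bbar ≤ |b| → |b| ≤ bhat →
        ubar ≤ |u| → |u| ≤ uhat →
        (∫ ω, |φ (1 + h * u * a + Real.sqrt h * u * b * ξ ω)
            - φδ (1 + h * u * a + Real.sqrt h * u * b * ξ ω)| ∂ℙ)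
          ≤ K₆ * h ^ ((3 : ℝ) / 2) * u ^ 2 * b ^ 2 :=
  stmt8_general ξ hξ hgauss φ φδ δ K hδ hK heq hclose abar ahat bbar bhat ubar uhat
end
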